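/- arXiv:1311.6765 — 4 statements merged into one kernel-verified Lean document; each statement's English description precedes it below -/
import Mathlib

section
/- Fix probability densities p and q w.r.t. P, both continuous and positive. Among all measurable detectors φ, the function φ*(ω) = (1/2)·ln(p(ω)/q(ω)) minimizes Φ(φ) = ln(∫ e^{−φ} p dP) + ln(∫ e^{φ} q dP), and the minimal value is 2·ln(∫ √(p q) dP). -/
/-!
At the detector φ* = ½ ln(p/q) both integrands of Φ collapse to √(pq). For any other detector φ,
√(pq) = √(e^{-φ} p) · √(e^{φ} q), so by Cauchy–Schwarz
(∫ √(pq))² ≤ (∫ e^{-φ} p)(∫ e^{φ} q); taking logarithms gives Φ(φ*) = 2 ln ∫ √(pq) ≤ Φ(φ).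
-/

open MeasureTheory

namespace Real

lemma exp_half_mul_log_div_mul {a b : ℝ} (ha : 0 < a) (hb : 0 < b) :
    exp ((1 / 2) * log (a / b)) * b = √(a * b) := by
  have hab : a * b = a / b * b ^ 2 := by field_simp
  rw [one_div_mul_eq_div, exp_half, exp_log (div_pos ha hb), hab,
    sqrt_mul (div_pos ha hb).le, sqrt_sq hb.le]

lemma exp_neg_half_mul_log_div_mul {a b : ℝ} (ha : 0 < a) (hb : 0 < b) :
    exp (-((1 / 2) * log (a / b))) * a = √(a * b) := by
  rw [← mul_neg, ← log_inv, inv_div, exp_half_mul_log_div_mul hb ha, mul_comm]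

end Real

namespace MeasureTheory

variable {α : Type*} [MeasurableSpace α] {μ : Measure α} {f g : α → ℝ}

lemma integral_pos_of_forall_pos [NeZero μ] (hf : ∀ x, 0 < f x) (hfi : Integrable f μ) :
    0 < ∫ x, f x ∂μ := by
  rw [integral_pos_iff_support_of_nonneg (fun x ↦ (hf x).le) hfi,
    Function.support_eq_univ fun x ↦ (hf x).ne']
  exact Measure.measure_univ_pos.mpr (NeZero.ne μ)

lemma Integrable.memLp_two_sqrt (hf : 0 ≤ᵐ[μ] f) (hfi : Integrable f μ) :
    MemLp (fun x ↦ √(f x)) 2 μ := by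
  refine (memLp_two_iff_integrable_sq
    (Real.continuous_sqrt.comp_aestronglyMeasurable hfi.aestronglyMeasurable)).mpr ?_
  refine hfi.congr ?_
  filter_upwards [hf] with x hx using (Real.sq_sqrt hx).symm

lemma integral_sqrt_mul_le (hf : 0 ≤ᵐ[μ] f) (hg : 0 ≤ᵐ[μ] g)
    (hfi : Integrable f μ) (hgi : Integrable g μ) :
    ∫ x, √(f x * g x) ∂μ ≤ √(∫ x, f x ∂μ) * √(∫ x, g x ∂μ) := by
  have hsqrt_mul : ∫ x, √(f x * g x) ∂μ = ∫ x, √(f x) * √(g x) ∂μ :=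
    integral_congr_ae (by filter_upwards [hf] with x hx using Real.sqrt_mul hx _)
  have hsq (h : α → ℝ) (hh : 0 ≤ᵐ[μ] h) : ∫ x, √(h x) ^ (2 : ℝ) ∂μ = ∫ x, h x ∂μ :=
    integral_congr_ae <| by
      filter_upwards [hh] with x hx
      rw [Real.rpow_two, Real.sq_sqrt hx]
  have holder := integral_mul_le_Lp_mul_Lq_of_nonneg Real.HolderConjugate.two_two
    (.of_forall fun x ↦ Real.sqrt_nonneg (f x)) (.of_forall fun x ↦ Real.sqrt_nonneg (g x))
    (by simpa using hfi.memLp_two_sqrt hf) (by simpa using hgi.memLp_two_sqrt hg)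
  rwa [← hsqrt_mul, hsq f hf, hsq g hg, ← Real.sqrt_eq_rpow, ← Real.sqrt_eq_rpow] at holder

lemma integrable_sqrt_mul (hf : 0 ≤ᵐ[μ] f) (hg : 0 ≤ᵐ[μ] g)
    (hfi : Integrable f μ) (hgi : Integrable g μ) :
    Integrable (fun x ↦ √(f x * g x)) μ := by
  refine ((hfi.memLp_two_sqrt hf).integrable_mul (hgi.memLp_two_sqrt hg)).congr ?_
  filter_upwards [hf] with x hx using (Real.sqrt_mul hx _).symm

lemma two_mul_log_integral_sqrt_mul_le (hf : ∀ x, 0 < f x) (hg : ∀ x, 0 < g x)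
    (hfi : Integrable f μ) (hgi : Integrable g μ) :
    2 * Real.log (∫ x, √(f x * g x) ∂μ) ≤ Real.log (∫ x, f x ∂μ) + Real.log (∫ x, g x ∂μ) := by
  rcases eq_zero_or_neZero μ with rfl | _
  · simp
  have hf' : 0 ≤ᵐ[μ] f := .of_forall fun x ↦ (hf x).le
  have hg' : 0 ≤ᵐ[μ] g := .of_forall fun x ↦ (hg x).le
  have hA := integral_pos_of_forall_pos hf hfi
  have hB := integral_pos_of_forall_pos hg hgi
  have hI := integral_pos_of_forall_pos (fun x ↦ Real.sqrt_pos.mpr (mul_pos (hf x) (hg x)))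
    (integrable_sqrt_mul hf' hg' hfi hgi)
  calc 2 * Real.log (∫ x, √(f x * g x) ∂μ)
      ≤ 2 * Real.log (√(∫ x, f x ∂μ) * √(∫ x, g x ∂μ)) := by
        gcongr
        exact integral_sqrt_mul_le hf' hg' hfi hgi
    _ = Real.log (∫ x, f x ∂μ) + Real.log (∫ x, g x ∂μ) := by
        rw [Real.log_mul (by positivity) (by positivity), Real.log_sqrt hA.le,
          Real.log_sqrt hB.le]
        ring

end MeasureTheory
theorem optimal_detector_is_half_log_likelihood_ratio_general
    {Ω : Type*} [MeasurableSpace Ω]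
    (P : Measure Ω)
    (p q : Ω → ℝ)
    (hp0 : ∀ ω, 0 < p ω) (hq0 : ∀ ω, 0 < q ω) :
    (∀ φ : Ω → ℝ, Measurable φ →
        Integrable (fun ω => Real.exp (-(φ ω)) * p ω) P →
        Integrable (fun ω => Real.exp (φ ω) * q ω) P →
        Real.log (∫ ω, Real.exp (-((1/2) * Real.log (p ω / q ω))) * p ω ∂P)
          + Real.log (∫ ω, Real.exp ((1/2) * Real.log (p ω / q ω)) * q ω ∂P)
        ≤ Real.log (∫ ω, Real.exp (-(φ ω)) * p ω ∂P)
          + Real.log (∫ ω, Real.exp (φ ω) * q ω ∂P))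
    ∧ Real.log (∫ ω, Real.exp (-((1/2) * Real.log (p ω / q ω))) * p ω ∂P)
        + Real.log (∫ ω, Real.exp ((1/2) * Real.log (p ω / q ω)) * q ω ∂P)
      = 2 * Real.log (∫ ω, Real.sqrt (p ω * q ω) ∂P) := by
  have hleft : ∫ ω, Real.exp (-((1/2) * Real.log (p ω / q ω))) * p ω ∂P
      = ∫ ω, √(p ω * q ω) ∂P := by
    simp only [Real.exp_neg_half_mul_log_div_mul (hp0 _) (hq0 _)]
  have hright : ∫ ω, Real.exp ((1/2) * Real.log (p ω / q ω)) * q ω ∂P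
      = ∫ ω, √(p ω * q ω) ∂P := by
    simp only [Real.exp_half_mul_log_div_mul (hp0 _) (hq0 _)]
  rw [hleft, hright]
  refine ⟨fun φ _ hφp hφq ↦ ?_, by ring⟩
  have hcancel (ω : Ω) : Real.exp (-(φ ω)) * p ω * (Real.exp (φ ω) * q ω) = p ω * q ω := by
    rw [Real.exp_neg]
    field_simp
  have key := two_mul_log_integral_sqrt_mul_le (fun ω ↦ mul_pos (Real.exp_pos _) (hp0 ω))
    (fun ω ↦ mul_pos (Real.exp_pos _) (hq0 ω)) hφp hφq
  simp only [hcancel] at key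
  linarith

/-- The detector φ* = (1/2)ln(p/q) minimizes Φ(φ) = ln ∫ e^{-φ} p + ln ∫ e^{φ} q over all
measurable detectors (with the relevant integrals finite), and the minimal value is
2 ln ∫ √(pq). -/
theorem optimal_detector_is_half_log_likelihood_ratio
    {Ω : Type*} [TopologicalSpace Ω] [MeasurableSpace Ω] [OpensMeasurableSpace Ω]
    (P : Measure Ω)
    (p q : Ω → ℝ) (hpc : Continuous p) (hqc : Continuous q)
    (hp0 : ∀ ω, 0 < p ω) (hq0 : ∀ ω, 0 < q ω)
    (hpi : Integrable p P) (hqi : Integrable q P)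
    (hp1 : ∫ ω, p ω ∂P = 1) (hq1 : ∫ ω, q ω ∂P = 1) :
    (∀ φ : Ω → ℝ, Measurable φ →
        Integrable (fun ω => Real.exp (-(φ ω)) * p ω) P →
        Integrable (fun ω => Real.exp (φ ω) * q ω) P →
        Real.log (∫ ω, Real.exp (-((1/2) * Real.log (p ω / q ω))) * p ω ∂P)
          + Real.log (∫ ω, Real.exp ((1/2) * Real.log (p ω / q ω)) * q ω ∂P)
        ≤ Real.log (∫ ω, Real.exp (-(φ ω)) * p ω ∂P)
          + Real.log (∫ ω, Real.exp (φ ω) * q ω ∂P))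
    ∧ Real.log (∫ ω, Real.exp (-((1/2) * Real.log (p ω / q ω))) * p ω ∂P)
        + Real.log (∫ ω, Real.exp ((1/2) * Real.log (p ω / q ω)) * q ω ∂P)
      = 2 * Real.log (∫ ω, Real.sqrt (p ω * q ω) ∂P) :=
  optimal_detector_is_half_log_likelihood_ratio_general P p q hp0 hq0
end

section
/- Any test T̄ deciding between two hypotheses with risk at most ε̄ ∈ (0, 1/2) induces a detector φ̄(ω) = (1/2)·ln((1−ε̄)/ε̄)·T̄(ω) whose risk is at most 2√(ε̄(1−ε̄)): for every density p obeying the first hypothesis, ∫ e^{−φ̄} p dP ≤ 2√(ε̄(1−ε̄)), and for every density q obeying the second hypothesis, ∫ e^{φ̄} q dP ≤ 2√(ε̄(1−ε̄)). -/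
/-!
On the event where the test errs the detector weighs the density by `e^c`, elsewhere by `e^{-c}`,
with `c = ½ ln((1-ε)/ε) ≥ 0`. Since the error event has mass at most `ε`, the risk is at most
`e^c ε + e^{-c} (1-ε)`, and this choice of `c` balances the two terms at `√(ε(1-ε))` each.
-/

open MeasureTheory

lemma Real.exp_half_log_div_mul {x y : ℝ} (hx : 0 < x) (hy : 0 < y) :
    Real.exp (1 / 2 * Real.log (x / y)) * y = Real.sqrt (x * y) := by
  have hsqrt : Real.exp (1 / 2 * Real.log (x / y)) = Real.sqrt (x / y) := by
    rw [Real.sqrt_eq_rpow, Real.rpow_def_of_pos (div_pos hx hy), mul_comm]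
  rw [hsqrt]
  calc Real.sqrt (x / y) * y = Real.sqrt (x / y) * Real.sqrt (y * y) := by
        rw [Real.sqrt_mul_self hy.le]
    _ = Real.sqrt (x / y * (y * y)) := (Real.sqrt_mul (div_nonneg hx.le hy.le) _).symm
    _ = Real.sqrt (x * y) := by
        congr 1
        field_simp

lemma exp_half_log_odds_balance {ε : ℝ} (h0 : 0 < ε) (h1 : ε < 1) :
    Real.exp (1 / 2 * Real.log ((1 - ε) / ε)) * ε
      + Real.exp (-(1 / 2 * Real.log ((1 - ε) / ε))) * (1 - ε)
      = 2 * Real.sqrt (ε * (1 - ε)) := by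
  have h1' : 0 < 1 - ε := by linarith
  have hneg : -(1 / 2 * Real.log ((1 - ε) / ε)) = 1 / 2 * Real.log (ε / (1 - ε)) := by
    rw [Real.log_div h1'.ne' h0.ne', Real.log_div h0.ne' h1'.ne']
    ring
  rw [hneg, Real.exp_half_log_div_mul h1' h0, Real.exp_half_log_div_mul h0 h1', mul_comm (1 - ε)]
  ring

lemma half_log_odds_nonneg {ε : ℝ} (h0 : 0 < ε) (h12 : ε ≤ 1 / 2) :
    0 ≤ 1 / 2 * Real.log ((1 - ε) / ε) :=
  mul_nonneg (by norm_num) (Real.log_nonneg ((one_le_div h0).mpr (by linarith)))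

/-- No sign condition on `f` is needed, since `g f = a f + (b - a) 𝟙_S f`. -/
lemma integral_two_valued_mul_le {Ω : Type*} [MeasurableSpace Ω] {P : Measure Ω}
    {S : Set Ω} (hS : MeasurableSet S) {f : Ω → ℝ} (hf : Integrable f P)
    (hf1 : ∫ ω, f ω ∂P = 1) {ε : ℝ} (hfS : ∫ ω in S, f ω ∂P ≤ ε)
    {a b : ℝ} (hab : a ≤ b) {g : Ω → ℝ} (hgS : ∀ ω ∈ S, g ω = b) (hgSc : ∀ ω ∉ S, g ω = a) :
    ∫ ω, g ω * f ω ∂P ≤ b * ε + a * (1 - ε) := by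
  have hsplit : (fun ω => g ω * f ω) = fun ω => a * f ω + (b - a) * S.indicator f ω := by
    funext ω
    by_cases hω : ω ∈ S
    · simp only [hgS ω hω, Set.indicator_of_mem hω]
      ring
    · simp [hgSc ω hω, hω]
  rw [hsplit, integral_add (hf.const_mul a) ((hf.indicator hS).const_mul (b - a)),
    integral_const_mul, integral_const_mul, integral_indicator hS, hf1]
  nlinarith [mul_le_mul_of_nonneg_left hfS (sub_nonneg.mpr hab)]

lemma integral_exp_mul_sign_mul_le {Ω : Type*} [MeasurableSpace Ω] {P : Measure Ω}
    {S : Set Ω} (hS : MeasurableSet S) {f : Ω → ℝ} (hf : Integrable f P)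
    (hf1 : ∫ ω, f ω ∂P = 1) {ε : ℝ} (hfS : ∫ ω in S, f ω ∂P ≤ ε)
    {c : ℝ} (hc : 0 ≤ c) {s : Ω → ℝ} (hsS : ∀ ω ∈ S, s ω = 1) (hsSc : ∀ ω ∉ S, s ω = -1) :
    ∫ ω, Real.exp (c * s ω) * f ω ∂P ≤ Real.exp c * ε + Real.exp (-c) * (1 - ε) :=
  integral_two_valued_mul_le hS hf hf1 hfS (Real.exp_le_exp.mpr (by linarith))
    (fun ω hω => by rw [hsS ω hω, mul_one]) (fun ω hω => by rw [hsSc ω hω, mul_neg_one])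

/-- Any test with risk ε̄ ∈ (0,1/2) induces the detector
φ̄ = (1/2) ln((1-ε̄)/ε̄) · T̄ whose risk is at most 2√(ε̄(1-ε̄)). -/
theorem test_induces_detector_with_risk
    {Ω : Type*} [MeasurableSpace Ω] (P : Measure Ω)
    (X Y : Set (Ω → ℝ))
    (T : Ω → ℝ) (hTm : Measurable T) (hTval : ∀ ω, T ω = 1 ∨ T ω = -1)
    (εbar : ℝ) (h0 : 0 < εbar) (h12 : εbar < 1/2)
    (hXd : ∀ p ∈ X, (∀ ω, 0 ≤ p ω) ∧ Measurable p ∧ Integrable p P ∧ ∫ ω, p ω ∂P = 1)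
    (hYd : ∀ q ∈ Y, (∀ ω, 0 ≤ q ω) ∧ Measurable q ∧ Integrable q P ∧ ∫ ω, q ω ∂P = 1)
    (hriskX : ∀ p ∈ X, ∫ ω in {ω | T ω = -1}, p ω ∂P ≤ εbar)
    (hriskY : ∀ q ∈ Y, ∫ ω in {ω | T ω = 1}, q ω ∂P ≤ εbar) :
    (∀ p ∈ X, ∫ ω, Real.exp (-((1/2) * Real.log ((1 - εbar)/εbar) * T ω)) * p ω ∂P
        ≤ 2 * Real.sqrt (εbar * (1 - εbar))) ∧
    (∀ q ∈ Y, ∫ ω, Real.exp ((1/2) * Real.log ((1 - εbar)/εbar) * T ω) * q ω ∂P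
        ≤ 2 * Real.sqrt (εbar * (1 - εbar))) := by
  set c := (1/2) * Real.log ((1 - εbar)/εbar)
  have hc : 0 ≤ c := half_log_odds_nonneg h0 h12.le
  have hbalance :
      Real.exp c * εbar + Real.exp (-c) * (1 - εbar) = 2 * Real.sqrt (εbar * (1 - εbar)) :=
    exp_half_log_odds_balance h0 (by linarith)
  rw [← hbalance]
  constructor
  · intro p hp
    obtain ⟨-, -, hpi, hp1⟩ := hXd p hp
    simpa only [mul_neg] using integral_exp_mul_sign_mul_le (s := fun ω => -T ω)
      (hTm (measurableSet_singleton (-1))) hpi hp1 (hriskX p hp) hc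
      (fun ω (hω : T ω = -1) => by simp [hω]) (fun ω hω => by simp [(hTval ω).resolve_right hω])
  · intro q hq
    obtain ⟨-, -, hqi, hq1⟩ := hYd q hq
    exact integral_exp_mul_sign_mul_le (hTm (measurableSet_singleton 1)) hqi hq1 (hriskY q hq) hc
      (fun ω hω => hω) (fun ω hω => (hTval ω).resolve_left hω)
end

section
/- Let E be an m × n matrix with positive entries and let H = [[0, E],[Eᵀ, 0]]. Then the Perron–Frobenius eigenvalue of H equals the spectral norm ‖E‖_{2,2}, is positive, and there exists an eigenvector z = [g; h] of H with eigenvalue ‖E‖_{2,2} such that g ∈ ℝ^m and h ∈ ℝ^n both have all entries strictly positive; equivalently, E h = ‖E‖_{2,2} g and Eᵀ g = ‖E‖_{2,2} h with g, h > 0. -/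
/-!
The spectral norm `σ = ‖E‖₂,₂` is attained at some unit vector `x`, by compactness of the sphere.
Since `E ≥ 0`, `|E x| ≤ E |x|` entrywise, so it is also attained at the nonnegative unit vector
`h = |x|`. Expanding `‖Eᵀ E h - σ² h‖²` shows that any maximiser satisfies `Eᵀ E h = σ² h`.
Positivity of `E` makes `E h > 0`, hence `σ > 0` and `σ² h = Eᵀ (E h) > 0`; then `g = σ⁻¹ E h`
gives `E h = σ g` and `Eᵀ g = σ h`, i.e. `[g; h]` is a positive eigenvector of `H`.
-/

open Matrix

/-- The spectral norm (largest singular value) of a rectangular real matrix, as the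
operator norm of the induced map between Euclidean spaces. -/
noncomputable def rectSpectralNorm {m n : ℕ} (E : Matrix (Fin m) (Fin n) ℝ) : ℝ :=
  ‖LinearMap.toContinuousLinearMap (Matrix.toEuclideanLin E)‖

theorem ContinuousLinearMap.exists_norm_eq_one_norm_apply_eq_opNorm {E F : Type*}
    [NormedAddCommGroup E] [NormedSpace ℝ E] [FiniteDimensional ℝ E] [Nontrivial E]
    [SeminormedAddCommGroup F] [NormedSpace ℝ F] (f : E →L[ℝ] F) :
    ∃ x, ‖x‖ = 1 ∧ ‖f x‖ = ‖f‖ := by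
  have hK := (isCompact_sphere (0 : E) 1).image f.continuous.norm
  obtain ⟨x, hx, hfx⟩ := hK.sSup_mem ((NormedSpace.sphere_nonempty.mpr zero_le_one).image _)
  exact ⟨x, mem_sphere_zero_iff_norm.1 hx, hfx.trans f.sSup_sphere_eq_norm⟩

theorem ContinuousLinearMap.adjoint_apply_apply_eq_sq_smul_of_norm_apply_eq {E F : Type*}
    [NormedAddCommGroup E] [InnerProductSpace ℝ E] [CompleteSpace E]
    [NormedAddCommGroup F] [InnerProductSpace ℝ F] [CompleteSpace F]
    (f : E →L[ℝ] F) {x : E} (hx : ‖f x‖ = ‖f‖ * ‖x‖) :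
    adjoint f (f x) = ‖f‖ ^ 2 • x := by
  have h_norm : ‖adjoint f (f x)‖ ≤ ‖f‖ ^ 2 * ‖x‖ := by
    calc ‖adjoint f (f x)‖ ≤ ‖adjoint f‖ * ‖f x‖ := (adjoint f).le_opNorm _
      _ = ‖f‖ ^ 2 * ‖x‖ := by rw [LinearIsometryEquiv.norm_map, hx]; ring
  have h_inner : inner ℝ (adjoint f (f x)) x = ‖f‖ ^ 2 * ‖x‖ ^ 2 := by
    rw [adjoint_inner_left, real_inner_self_eq_norm_sq, hx, mul_pow]
  -- `‖f† f x - ‖f‖² x‖² = ‖f† f x‖² - 2 ‖f‖⁴ ‖x‖² + ‖f‖⁴ ‖x‖² ≤ 0`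
  have h_sq := norm_sub_sq_real (adjoint f (f x)) (‖f‖ ^ 2 • x)
  rw [real_inner_smul_right, norm_smul, h_inner, Real.norm_of_nonneg (by positivity)] at h_sq
  rw [← sub_eq_zero, ← norm_eq_zero, ← sq_eq_zero_iff]
  refine le_antisymm ?_ (sq_nonneg _)
  nlinarith [norm_nonneg (adjoint f (f x)), norm_nonneg x, norm_nonneg f]

section NonnegMatrix

variable {m n : Type*} [Fintype n]

theorem Matrix.abs_mulVec_le_mulVec_abs {E : Matrix m n ℝ} (hE : ∀ i j, 0 ≤ E i j)
    (x : n → ℝ) : |E *ᵥ x| ≤ E *ᵥ |x| := fun i =>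
  calc |∑ j, E i j * x j| ≤ ∑ j, |E i j * x j| := Finset.abs_sum_le_sum_abs _ _
    _ = ∑ j, E i j * |x j| := by simp_rw [abs_mul, abs_of_nonneg (hE i _)]

theorem Matrix.norm_toLp_mulVec_le_mulVec_abs [Fintype m] {E : Matrix m n ℝ}
    (hE : ∀ i j, 0 ≤ E i j) (x : n → ℝ) :
    ‖WithLp.toLp 2 (E *ᵥ x)‖ ≤ ‖WithLp.toLp 2 (E *ᵥ |x|)‖ := by
  simp_rw [EuclideanSpace.norm_eq, Real.norm_eq_abs]
  gcongr √(∑ i, ?_ ^ 2) with i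
  exact (abs_mulVec_le_mulVec_abs hE x i).trans (le_abs_self _)

theorem Matrix.mulVec_pos {R : Type*} [Semiring R] [PartialOrder R] [IsStrictOrderedRing R]
    {E : Matrix m n R} (hE : ∀ i j, 0 < E i j) {x : n → R} (hx : 0 ≤ x) (hx₀ : x ≠ 0) (i : m) :
    0 < (E *ᵥ x) i := by
  obtain ⟨j, hj⟩ := Function.ne_iff.1 hx₀
  exact Finset.sum_pos' (fun j _ => mul_nonneg (hE i j).le (hx j))
    ⟨j, Finset.mem_univ j, mul_pos (hE i j) ((hx j).lt_of_ne' hj)⟩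

end NonnegMatrix

theorem exists_nonneg_norm_mulVec_eq_rectSpectralNorm {m n : ℕ} [NeZero n]
    {E : Matrix (Fin m) (Fin n) ℝ} (hE : ∀ i j, 0 ≤ E i j) :
    ∃ x : Fin n → ℝ, 0 ≤ x ∧ ‖WithLp.toLp 2 x‖ = 1 ∧
      ‖WithLp.toLp 2 (E *ᵥ x)‖ = rectSpectralNorm E := by
  set f := LinearMap.toContinuousLinearMap (toEuclideanLin E)
  obtain ⟨x, hx, hfx⟩ := f.exists_norm_eq_one_norm_apply_eq_opNorm
  have h_abs : ‖WithLp.toLp 2 |x.ofLp|‖ = 1 := by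
    simpa [EuclideanSpace.norm_eq] using hx
  refine ⟨|x.ofLp|, abs_nonneg _, h_abs, le_antisymm ?_ ?_⟩
  · calc ‖WithLp.toLp 2 (E *ᵥ |x.ofLp|)‖ = ‖f (WithLp.toLp 2 |x.ofLp|)‖ := rfl
      _ ≤ ‖f‖ * ‖WithLp.toLp 2 |x.ofLp|‖ := f.le_opNorm _
      _ = ‖f‖ := by rw [h_abs, mul_one]
  · calc ‖f‖ = ‖WithLp.toLp 2 (E *ᵥ x.ofLp)‖ := hfx.symm
      _ ≤ _ := norm_toLp_mulVec_le_mulVec_abs hE x.ofLp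

theorem transpose_mulVec_mulVec_eq_sq_smul_of_norm_mulVec_eq {m n : ℕ}
    {E : Matrix (Fin m) (Fin n) ℝ} {x : Fin n → ℝ}
    (hx : ‖WithLp.toLp 2 (E *ᵥ x)‖ = rectSpectralNorm E * ‖WithLp.toLp 2 x‖) :
    Eᵀ *ᵥ (E *ᵥ x) = rectSpectralNorm E ^ 2 • x := by
  set f := LinearMap.toContinuousLinearMap (toEuclideanLin E)
  have h_adj :
      ContinuousLinearMap.adjoint f = LinearMap.toContinuousLinearMap (toEuclideanLin Eᵀ) := by
    rw [← conjTranspose_eq_transpose_of_trivial, toEuclideanLin_conjTranspose_eq_adjoint,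
      LinearMap.adjoint_toContinuousLinearMap]
  have h_eig := f.adjoint_apply_apply_eq_sq_smul_of_norm_apply_eq (x := WithLp.toLp 2 x) hx
  rw [h_adj] at h_eig
  exact congrArg WithLp.ofLp h_eig

/-- Perron-Frobenius for H = [[0,E],[Eᵀ,0]] with E entrywise positive: the leading
eigenvalue of H equals the spectral norm ‖E‖₂,₂, is positive, and admits a strictly
positive eigenvector [g;h], i.e. Eh = ‖E‖g and Eᵀg = ‖E‖h with g,h > 0. -/
theorem perron_frobenius_bipartite
    {m n : ℕ} [NeZero m] [NeZero n] (E : Matrix (Fin m) (Fin n) ℝ)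
    (hE : ∀ i j, 0 < E i j) :
    0 < rectSpectralNorm E ∧
    ∃ (g : Fin m → ℝ) (h : Fin n → ℝ),
      (∀ i, 0 < g i) ∧ (∀ j, 0 < h j) ∧
      E *ᵥ h = rectSpectralNorm E • g ∧
      Eᵀ *ᵥ g = rectSpectralNorm E • h ∧
      (Matrix.fromBlocks 0 E Eᵀ 0) *ᵥ (Sum.elim g h)
        = rectSpectralNorm E • Sum.elim g h := by
  obtain ⟨h, h_nonneg, h_norm, hEh_norm⟩ :=
    exists_nonneg_norm_mulVec_eq_rectSpectralNorm fun i j => (hE i j).le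
  set σ := rectSpectralNorm E
  have h_ne : h ≠ 0 := by rintro rfl; simp at h_norm
  have hEh : ∀ i, 0 < (E *ᵥ h) i := mulVec_pos hE h_nonneg h_ne
  have hEh_ne : E *ᵥ h ≠ 0 := fun h₀ => (hEh 0).ne' (congrFun h₀ 0)
  have hσ : 0 < σ := by
    rwa [← hEh_norm, norm_pos_iff, Ne, WithLp.toLp_eq_zero]
  have h_eig : Eᵀ *ᵥ (E *ᵥ h) = σ ^ 2 • h :=
    transpose_mulVec_mulVec_eq_sq_smul_of_norm_mulVec_eq (by rw [h_norm, hEh_norm, mul_one])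
  have h_pos : ∀ j, 0 < h j := fun j => by
    have := mulVec_pos (E := Eᵀ) (fun j i => hE i j) (fun i => (hEh i).le) hEh_ne j
    rw [h_eig, Pi.smul_apply, smul_eq_mul] at this
    exact pos_of_mul_pos_right this (sq_nonneg σ)
  set g := σ⁻¹ • (E *ᵥ h)
  have hg : E *ᵥ h = σ • g := (smul_inv_smul₀ hσ.ne' _).symm
  have hgh : Eᵀ *ᵥ g = σ • h := by
    rw [mulVec_smul, h_eig, smul_smul, sq, inv_mul_cancel_left₀ hσ.ne']
  refine ⟨hσ, g, h, fun i => smul_pos (inv_pos.2 hσ) (hEh i), h_pos, hg, hgh, ?_⟩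
  ext (i | j) <;> simp [fromBlocks_mulVec, hg, hgh]
end

section
/- Let [ε_{ij}] be a symmetric m×m matrix with zero diagonal and positive off-diagonal entries, let p₁,…,p_m > 0, let Ē = [p_i ε_{ij}], and let ρ be its Perron–Frobenius eigenvalue with positive eigenvector g. Then the skew-symmetric matrix α with α_{ij} = ln(g_j) − ln(g_i) is an optimal solution of min over skew-symmetric α of f(α) = max_{1≤i≤m} Σ_j p_i ε_{ij} exp(α_{ij}), and the optimal value equals ρ; moreover at this optimum all quantities p_i Σ_j ε_{ij} exp(α_{ij}) are equal to ρ. -/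
open Matrix

/-- Optimal shifts for multiple hypothesis testing: with Ē = [p_i ε_{ij}] having
Perron eigenvalue ρ and positive eigenvector g, the skew-symmetric shifts
ᾱ_{ij} = ln g_j - ln g_i equalize all row quantities p_i Σ_j ε_{ij} e^{ᾱ_{ij}} to ρ,
and no skew-symmetric shift matrix achieves a smaller max. -/
theorem optimal_skew_symmetric_shifts
    {m : ℕ} [NeZero m] (ε : Matrix (Fin m) (Fin m) ℝ)
    (hsym : ∀ i j, ε i j = ε j i) (hdiag : ∀ i, ε i i = 0)
    (hoff : ∀ i j, i ≠ j → 0 < ε i j)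
    (p : Fin m → ℝ) (hp : ∀ i, 0 < p i)
    (ρ : ℝ) (g : Fin m → ℝ) (hg : ∀ i, 0 < g i)
    (heig : (Matrix.of fun i j => p i * ε i j) *ᵥ g = ρ • g) :
    (∀ i, ∑ j, p i * ε i j * Real.exp (Real.log (g j) - Real.log (g i)) = ρ) ∧
    (Finset.univ.sup' Finset.univ_nonempty
        (fun i => ∑ j, p i * ε i j * Real.exp (Real.log (g j) - Real.log (g i))) = ρ) ∧
    (∀ α : Matrix (Fin m) (Fin m) ℝ, (∀ i j, α i j = -α j i) →
      ρ ≤ Finset.univ.sup' Finset.univ_nonempty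
            (fun i => ∑ j, p i * ε i j * Real.exp (α i j))) := by
  have heig' : ∀ i, ∑ j, p i * ε i j * g j = ρ * g i := by
    intro i
    have h := congrFun heig i
    simpa [Matrix.mulVec, dotProduct] using h
  have h1 : ∀ i, ∑ j, p i * ε i j * Real.exp (Real.log (g j) - Real.log (g i)) = ρ := by
    intro i
    have hs : ∑ j, p i * ε i j * Real.exp (Real.log (g j) - Real.log (g i))
        = (∑ j, p i * ε i j * g j) / g i := by
      rw [Finset.sum_div]
      refine Finset.sum_congr rfl fun j _ => ?_
      rw [Real.exp_sub, Real.exp_log (hg j), Real.exp_log (hg i), mul_div_assoc]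
    rw [hs, heig' i, mul_div_assoc, div_self (hg i).ne', mul_one]
  have i0 : Fin m := ⟨0, Nat.pos_of_ne_zero (NeZero.ne m)⟩
  refine ⟨h1, ?_, ?_⟩
  · apply le_antisymm
    · exact Finset.sup'_le _ _ fun i _ => (h1 i).le
    · calc ρ = ∑ j, p i0 * ε i0 j * Real.exp (Real.log (g j) - Real.log (g i0)) :=
            (h1 i0).symm
        _ ≤ _ := Finset.le_sup'
            (fun i => ∑ j, p i * ε i j * Real.exp (Real.log (g j) - Real.log (g i)))
            (Finset.mem_univ i0)
  · intro α hα
    have hεnn : ∀ i j, 0 ≤ ε i j := by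
      intro i j
      rcases eq_or_ne i j with rfl | h
      · simp [hdiag]
      · exact (hoff i j h).le
    set M := Finset.univ.sup' Finset.univ_nonempty
        (fun i => ∑ j, p i * ε i j * Real.exp (α i j)) with hM
    have hwpos : 0 < ∑ i, g i ^ 2 / p i :=
      Finset.sum_pos (fun i _ => div_pos (pow_pos (hg i) 2) (hp i)) Finset.univ_nonempty
    -- the weighted sum equals the double sum
    have hws : ∑ i, (g i ^ 2 / p i) * ∑ j, p i * ε i j * Real.exp (α i j)
        = ∑ i, ∑ j, g i ^ 2 * ε i j * Real.exp (α i j) := by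
      refine Finset.sum_congr rfl fun i _ => ?_
      rw [Finset.mul_sum]
      refine Finset.sum_congr rfl fun j _ => ?_
      field_simp [(hp i).ne']
    -- swap identity
    have hswap : ∑ i, ∑ j, g i ^ 2 * ε i j * Real.exp (α i j)
        = ∑ i, ∑ j, g j ^ 2 * ε i j * Real.exp (-(α i j)) := by
      rw [Finset.sum_comm]
      refine Finset.sum_congr rfl fun j _ => Finset.sum_congr rfl fun i _ => ?_
      rw [hsym i j, hα i j]
    -- core AM-GM inequality
    have hcore : ∑ i, ∑ j, ε i j * (g i * g j)
        ≤ ∑ i, ∑ j, g i ^ 2 * ε i j * Real.exp (α i j) := by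
      have h2 : 2 * ∑ i, ∑ j, ε i j * (g i * g j)
          ≤ ∑ i, ∑ j, (g i ^ 2 * ε i j * Real.exp (α i j)
              + g j ^ 2 * ε i j * Real.exp (-(α i j))) := by
        rw [Finset.mul_sum]
        refine Finset.sum_le_sum fun i _ => ?_
        rw [Finset.mul_sum]
        refine Finset.sum_le_sum fun j _ => ?_
        have e1 : Real.exp (α i j / 2) * Real.exp (α i j / 2) = Real.exp (α i j) := by
          rw [← Real.exp_add]; ring_nf
        have e2 : Real.exp (-(α i j) / 2) * Real.exp (-(α i j) / 2)
            = Real.exp (-(α i j)) := by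
          rw [← Real.exp_add]; ring_nf
        have e3 : Real.exp (α i j / 2) * Real.exp (-(α i j) / 2) = 1 := by
          rw [← Real.exp_add]; ring_nf; exact Real.exp_zero
        have h0 := two_mul_le_add_sq (g i * Real.exp (α i j / 2))
            (g j * Real.exp (-(α i j) / 2))
        have ha : (g i * Real.exp (α i j / 2)) ^ 2 = g i ^ 2 * Real.exp (α i j) := by
          rw [mul_pow, show Real.exp (α i j / 2) ^ 2 = Real.exp (α i j) from by
            rw [sq]; exact e1]
        have hb : (g j * Real.exp (-(α i j) / 2)) ^ 2 = g j ^ 2 * Real.exp (-(α i j)) := by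
          rw [mul_pow, show Real.exp (-(α i j) / 2) ^ 2 = Real.exp (-(α i j)) from by
            rw [sq]; exact e2]
        have hc : 2 * (g i * Real.exp (α i j / 2)) * (g j * Real.exp (-(α i j) / 2))
            = 2 * (g i * g j) := by
          linear_combination 2 * g i * g j * e3
        have key : 2 * (g i * g j) ≤ g i ^ 2 * Real.exp (α i j)
            + g j ^ 2 * Real.exp (-(α i j)) := by
          rw [← ha, ← hb, ← hc]; exact h0
        calc 2 * (ε i j * (g i * g j)) = ε i j * (2 * (g i * g j)) := by ring
          _ ≤ ε i j * (g i ^ 2 * Real.exp (α i j) + g j ^ 2 * Real.exp (-(α i j))) :=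
              mul_le_mul_of_nonneg_left key (hεnn i j)
          _ = g i ^ 2 * ε i j * Real.exp (α i j) + g j ^ 2 * ε i j * Real.exp (-(α i j)) := by
              ring
      simp only [Finset.sum_add_distrib] at h2
      linarith [hswap]
    -- the lower bound of the double sum equals ρ * weight
    have hlow : ∑ i, ∑ j, ε i j * (g i * g j) = ρ * ∑ i, g i ^ 2 / p i := by
      rw [Finset.mul_sum]
      refine Finset.sum_congr rfl fun i _ => ?_
      have hr : ∑ j, ε i j * (g i * g j) = (g i / p i) * ∑ j, p i * ε i j * g j := by
        rw [Finset.mul_sum]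
        refine Finset.sum_congr rfl fun j _ => ?_
        field_simp [(hp i).ne']
      rw [hr, heig' i]
      field_simp [(hp i).ne']
    -- each row sum is ≤ M
    have hup : ∑ i, (g i ^ 2 / p i) * ∑ j, p i * ε i j * Real.exp (α i j)
        ≤ M * ∑ i, g i ^ 2 / p i := by
      rw [Finset.mul_sum]
      refine Finset.sum_le_sum fun i _ => ?_
      rw [mul_comm M _]
      refine mul_le_mul_of_nonneg_left ?_ (le_of_lt (div_pos (pow_pos (hg i) 2) (hp i)))
      exact Finset.le_sup' (fun i => ∑ j, p i * ε i j * Real.exp (α i j))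
        (Finset.mem_univ i)
    have hfin : ρ * ∑ i, g i ^ 2 / p i ≤ M * ∑ i, g i ^ 2 / p i := by
      calc ρ * ∑ i, g i ^ 2 / p i = ∑ i, ∑ j, ε i j * (g i * g j) := hlow.symm
        _ ≤ ∑ i, ∑ j, g i ^ 2 * ε i j * Real.exp (α i j) := hcore
        _ = ∑ i, (g i ^ 2 / p i) * ∑ j, p i * ε i j * Real.exp (α i j) := hws.symm
        _ ≤ M * ∑ i, g i ^ 2 / p i := hup
    exact le_of_mul_le_mul_right hfin hwpos
end
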